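/- (Nikolov–Pyber) Let G be a finite group of order n, and let δ > 0 be a real number such that every nonzero finite-dimensional real representation of G having no nonzero G-invariant vector has dimension at least δ. If A, B, C are subsets of G with #A · #B · #C · δ > n³, then ABC = G, where ABC = {abc : a ∈ A, b ∈ B, c ∈ C}. -/

import Mathlib

/-!
Gowers' trick. Let `T` be convolution with the indicator of `A` on `ℓ²(G)`, and `f = 1_B - |B|/n`
the balanced indicator of `B`, which is orthogonal to the constants. If `x ∉ ABC`, then
`Tf = -|A||B|/n` on all of `xC⁻¹`, so `‖Tf‖² ≥ |C| (|A||B|/n)²`. On the other hand `T*T` is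
positive, has trace `n|A|` and commutes with right translations, so each of its eigenspaces meets
the orthogonal complement of the constants in a representation without invariant vectors, of
dimension at least `δ`. Hence every eigenvalue there is at most `n|A|/δ`, and
`δ ‖Tf‖² ≤ n|A| ‖f‖² ≤ n|A||B|`. Comparing the two bounds gives `|A||B||C| δ ≤ n³`.
-/

open Finset Module Module.End Pointwise RealInnerProductSpace

namespace LinearMap

variable {E : Type*} [NormedAddCommGroup E] [InnerProductSpace ℝ E] [FiniteDimensional ℝ E]

theorem IsSymmetric.inner_map_self_le_of_forall_hasEigenvalue_le {T : E →ₗ[ℝ] E}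
    (hT : T.IsSymmetric) {c : ℝ} (hc : ∀ μ, HasEigenvalue T μ → μ ≤ c) (x : E) :
    ⟪T x, x⟫ ≤ c * ‖x‖ ^ 2 := by
  let b := hT.eigenvectorBasis rfl
  calc ⟪T x, x⟫ = ∑ i, hT.eigenvalues rfl i * b.repr x i ^ 2 := by
        rw [← b.repr.inner_map_map, PiLp.inner_apply]
        refine sum_congr rfl fun i _ => ?_
        rw [show b.repr (T x) i = _ from hT.eigenvectorBasis_apply_self_apply rfl x i]
        simp only [b, RCLike.inner_apply, conj_trivial, RCLike.ofReal_real_eq_id, id_eq]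
        ring
    _ ≤ ∑ i, c * b.repr x i ^ 2 := by
        gcongr with i
        exact hc _ (hT.hasEigenvalue_eigenvalues rfl i)
    _ = c * ‖x‖ ^ 2 := by
        rw [← mul_sum, ← b.repr.norm_map, EuclideanSpace.norm_sq_eq]
        simp

theorem IsPositive.mul_finrank_eigenspace_le_trace {T : E →ₗ[ℝ] E} (hT : T.IsPositive)
    (μ : ℝ) : μ * finrank ℝ (eigenspace T μ) ≤ trace ℝ E T := by
  have hsym := hT.isSymmetric
  have hcard : (univ.filter (hsym.eigenvalues rfl · = μ)).card =
      finrank ℝ (eigenspace T μ) := hsym.card_filter_eigenvalues_eq rfl μ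
  calc μ * finrank ℝ (eigenspace T μ)
      = ∑ i ∈ univ.filter (hsym.eigenvalues rfl · = μ), hsym.eigenvalues rfl i := by
        rw [sum_congr rfl fun i hi => (mem_filter.mp hi).2, sum_const,
          hcard, nsmul_eq_mul, mul_comm]
    _ ≤ ∑ i, hsym.eigenvalues rfl i :=
        sum_le_sum_of_subset_of_nonneg (subset_univ _)
          fun i _ _ => hT.nonneg_eigenvalues rfl i
    _ = trace ℝ E T := (hsym.trace_eq_sum_eigenvalues rfl).symm

end LinearMap

def FixedPointFreeDimAtLeast (G : Type) [Group G] (δ : ℝ) : Prop :=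
  ∀ (V : Type) [AddCommGroup V] [Module ℝ V] [FiniteDimensional ℝ V]
    (ρ : Representation ℝ G V), Nontrivial V →
    (∀ v : V, (∀ g : G, ρ g v = v) → v = 0) → δ ≤ finrank ℝ V

namespace FixedPointFreeDimAtLeast

variable {G : Type} [Group G] {δ : ℝ}

theorem le_finrank_of_subrepresentation (hrep : FixedPointFreeDimAtLeast G δ) {V : Type}
    [AddCommGroup V] [Module ℝ V] [FiniteDimensional ℝ V] (ρ : Representation ℝ G V)
    {U : Submodule ℝ V} (hUρ : ∀ g, U ≤ U.comap (ρ g)) (hU : U ≠ ⊥)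
    (hfix : U ⊓ ρ.invariants = ⊥) :
    δ ≤ finrank ℝ U := by
  refine hrep U (ρ.subrepresentation U hUρ) (Submodule.nontrivial_iff_ne_bot.mpr hU) ?_
  intro u hu
  have : (u : V) ∈ U ⊓ ρ.invariants := ⟨u.2, fun g => congrArg Subtype.val (hu g)⟩
  simpa [hfix] using this

variable {E : Type} [NormedAddCommGroup E] [InnerProductSpace ℝ E] [FiniteDimensional ℝ E]

theorem eigenvalue_le_trace_div (hrep : FixedPointFreeDimAtLeast G δ) (hδ : 0 < δ)
    (ρ : Representation ℝ G E) (hρ : ∀ g u v, ⟪ρ g u, ρ g v⟫ = ⟪u, v⟫)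
    {M : E →ₗ[ℝ] E} (hM : M.IsPositive) (hMρ : ∀ g v, M (ρ g v) = ρ g (M v))
    {μ : ℝ} {f : E} (hf : f ∈ ρ.invariantsᗮ) (hf0 : f ≠ 0) (hfμ : M f = μ • f) :
    μ ≤ LinearMap.trace ℝ E M / δ := by
  set U := eigenspace M μ ⊓ ρ.invariantsᗮ
  have hUρ : ∀ g, U ≤ U.comap (ρ g) := by
    rintro g u ⟨hu, hu'⟩
    refine ⟨?_, fun v hv => ?_⟩
    · rw [SetLike.mem_coe, mem_eigenspace_iff] at hu ⊢
      rw [hMρ, hu, map_smul]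
    · rw [← (ρ.mem_invariants v).mp hv g, hρ]
      exact hu' v hv
  have hU : U ≠ ⊥ := (Submodule.ne_bot_iff U).mpr ⟨f, ⟨mem_eigenspace_iff.mpr hfμ, hf⟩, hf0⟩
  have hfix : U ⊓ ρ.invariants = ⊥ := by
    rw [inf_assoc, inf_comm ρ.invariantsᗮ, Submodule.inf_orthogonal_eq_bot, inf_bot_eq]
  have hμ : 0 ≤ μ := eigenvalue_nonneg_of_nonneg (hasEigenvalue_of_hasEigenvector
    ⟨mem_eigenspace_iff.mpr hfμ, hf0⟩) fun x => hM.re_inner_nonneg_right x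
  rw [le_div_iff₀ hδ]
  calc μ * δ ≤ μ * finrank ℝ U :=
        mul_le_mul_of_nonneg_left (hrep.le_finrank_of_subrepresentation ρ hUρ hU hfix) hμ
    _ ≤ μ * finrank ℝ (eigenspace M μ) := by
        gcongr; exact Submodule.finrank_mono inf_le_left
    _ ≤ LinearMap.trace ℝ E M := hM.mul_finrank_eigenspace_le_trace μ

theorem mul_inner_map_self_le (hrep : FixedPointFreeDimAtLeast G δ) (hδ : 0 < δ)
    (ρ : Representation ℝ G E) (hρ : ∀ g u v, ⟪ρ g u, ρ g v⟫ = ⟪u, v⟫)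
    {M : E →ₗ[ℝ] E} (hM : M.IsPositive) (hMρ : ∀ g v, M (ρ g v) = ρ g (M v))
    {f : E} (hf : f ∈ ρ.invariantsᗮ) :
    δ * ⟪M f, f⟫ ≤ LinearMap.trace ℝ E M * ‖f‖ ^ 2 := by
  set W := ρ.invariantsᗮ
  have hWM : ∀ w ∈ W, M w ∈ W := fun w hw v hv => by
    rw [← hM.isSymmetric]
    exact hw _ fun g => by rw [← hMρ, (ρ.mem_invariants v).mp hv g]
  have hMW : ⟪M f, f⟫ ≤ LinearMap.trace ℝ E M / δ * ‖f‖ ^ 2 :=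
    (hM.isSymmetric.restrict_invariant hWM).inner_map_self_le_of_forall_hasEigenvalue_le
      (fun μ hμ => by
        obtain ⟨w, hw, hw0⟩ := hμ.exists_hasEigenvector
        exact hrep.eigenvalue_le_trace_div hδ ρ hρ hM hMρ w.2 (by simpa using hw0)
          (congrArg Subtype.val (mem_eigenspace_iff.mp hw)))
      ⟨f, hf⟩
  rw [div_mul_eq_mul_div, le_div_iff₀ hδ] at hMW
  linarith

end FixedPointFreeDimAtLeast

section Indicator

variable {α : Type*} [DecidableEq α]

def indicatorVec (S : Finset α) : EuclideanSpace ℝ α :=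
  WithLp.toLp 2 fun a => if a ∈ S then 1 else 0

@[simp] lemma indicatorVec_apply (S : Finset α) (a : α) :
    indicatorVec S a = if a ∈ S then 1 else 0 := rfl

variable [Fintype α]

lemma inner_indicatorVec_left (S : Finset α) (v : EuclideanSpace ℝ α) :
    ⟪indicatorVec S, v⟫ = ∑ a ∈ S, v a := by
  simp [PiLp.inner_apply]

lemma norm_indicatorVec_sq (S : Finset α) : ‖indicatorVec S‖ ^ 2 = #S := by
  rw [← real_inner_self_eq_norm_sq, inner_indicatorVec_left]
  simp +contextual

noncomputable def balancedIndicator (B : Finset α) : EuclideanSpace ℝ α :=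
  (ℝ ∙ indicatorVec univ)ᗮ.starProjection (indicatorVec B)

lemma balancedIndicator_apply (B : Finset α) (a : α) :
    balancedIndicator B a = (if a ∈ B then 1 else 0) - #B / Fintype.card α := by
  simp [balancedIndicator, Submodule.starProjection_singleton, inner_indicatorVec_left,
    norm_indicatorVec_sq]

lemma balancedIndicator_mem_orthogonal (B : Finset α) :
    balancedIndicator B ∈ (ℝ ∙ indicatorVec (univ : Finset α))ᗮ :=
  Submodule.starProjection_apply_mem _ _

lemma norm_balancedIndicator_sq_le (B : Finset α) : ‖balancedIndicator B‖ ^ 2 ≤ #B :=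
  norm_indicatorVec_sq B ▸
    pow_le_pow_left₀ (norm_nonneg _) (Submodule.norm_starProjection_apply_le _ _) 2

end Indicator

section Group

variable {G : Type} [Group G]

variable (G) in
def rightRegular : Representation ℝ G (EuclideanSpace ℝ G) where
  toFun s :=
    { toFun f := WithLp.toLp 2 fun g => f (g * s)
      map_add' _ _ := rfl
      map_smul' _ _ := rfl }
  map_one' := LinearMap.ext fun f => PiLp.ext fun g => congrArg f.ofLp (mul_one g)
  map_mul' s t := LinearMap.ext fun f => PiLp.ext fun g => congrArg f.ofLp (mul_assoc g s t).symm

@[simp] lemma rightRegular_apply (s : G) (f : EuclideanSpace ℝ G) (g : G) :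
    rightRegular G s f g = f (g * s) := rfl

def leftConv (A : Finset G) : EuclideanSpace ℝ G →ₗ[ℝ] EuclideanSpace ℝ G where
  toFun f := WithLp.toLp 2 fun g => ∑ a ∈ A, f (a⁻¹ * g)
  map_add' f h := PiLp.ext fun g => by simp [sum_add_distrib]
  map_smul' c f := PiLp.ext fun g => by simp [mul_sum]

@[simp] lemma leftConv_apply (A : Finset G) (f : EuclideanSpace ℝ G) (g : G) :
    leftConv A f g = ∑ a ∈ A, f (a⁻¹ * g) := rfl

lemma leftConv_rightRegular (A : Finset G) (s : G) (f : EuclideanSpace ℝ G) :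
    leftConv A (rightRegular G s f) = rightRegular G s (leftConv A f) := by
  ext g
  simp [mul_assoc]

lemma leftConv_indicatorVec_singleton [DecidableEq G] (A : Finset G) (g : G) :
    leftConv A (indicatorVec {g}) = indicatorVec (A * {g}) := by
  ext h
  have hsolve : ∀ a : G, a⁻¹ * h = g ↔ a = h * g⁻¹ := fun a => by
    rw [inv_mul_eq_iff_eq_mul, eq_mul_inv_iff_mul_eq, eq_comm]
  have hmem : h ∈ A * {g} ↔ h * g⁻¹ ∈ A := by
    simp [mem_mul, ← eq_mul_inv_iff_mul_eq]
  simp only [leftConv_apply, indicatorVec_apply, mem_singleton, hsolve, sum_ite_eq', hmem]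

variable [Fintype G]

lemma inner_rightRegular (s : G) (u v : EuclideanSpace ℝ G) :
    ⟪rightRegular G s u, rightRegular G s v⟫ = ⟪u, v⟫ := by
  simp only [PiLp.inner_apply, rightRegular_apply]
  exact Fintype.sum_equiv (Equiv.mulRight s) _ _ fun _ => rfl

variable [DecidableEq G]

lemma invariants_rightRegular :
    (rightRegular G).invariants = ℝ ∙ indicatorVec (univ : Finset G) := by
  ext f
  rw [Representation.mem_invariants, Submodule.mem_span_singleton]
  constructor
  · intro hf
    refine ⟨f 1, PiLp.ext fun g => ?_⟩
    simpa using (congrArg (· 1) (hf g)).symm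
  · rintro ⟨c, rfl⟩ s
    ext
    simp

lemma adjoint_leftConv_apply (A : Finset G) (f : EuclideanSpace ℝ G) (g : G) :
    (leftConv A).adjoint f g = ∑ a ∈ A, f (a * g) := by
  calc (leftConv A).adjoint f g = ⟪indicatorVec {g}, (leftConv A).adjoint f⟫ := by
        rw [inner_indicatorVec_left, sum_singleton]
    _ = ∑ h ∈ A * {g}, f h := by
        rw [LinearMap.adjoint_inner_right, leftConv_indicatorVec_singleton, inner_indicatorVec_left]
    _ = ∑ a ∈ A, f (a * g) := by
        rw [mul_singleton, smul_finset_def, sum_image]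
        · rfl
        · intro a _ b _ h; simpa using h

lemma adjoint_leftConv_rightRegular (A : Finset G) (s : G) (f : EuclideanSpace ℝ G) :
    (leftConv A).adjoint (rightRegular G s f) = rightRegular G s ((leftConv A).adjoint f) := by
  ext g
  simp [adjoint_leftConv_apply, mul_assoc]

lemma trace_adjoint_comp_leftConv (A : Finset G) :
    LinearMap.trace ℝ _ ((leftConv A).adjoint ∘ₗ leftConv A) = Fintype.card G * #A := by
  have hdiag (g : G) : ⟪EuclideanSpace.basisFun G ℝ g,
      ((leftConv A).adjoint ∘ₗ leftConv A) (EuclideanSpace.basisFun G ℝ g)⟫ = #A := by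
    have hbasis : EuclideanSpace.basisFun G ℝ g = indicatorVec {g} := by
      ext h
      simp
    rw [hbasis, LinearMap.comp_apply, LinearMap.adjoint_inner_right, real_inner_self_eq_norm_sq,
      leftConv_indicatorVec_singleton, norm_indicatorVec_sq, card_mul_singleton]
  rw [LinearMap.trace_eq_sum_inner _ (EuclideanSpace.basisFun G ℝ)]
  simp only [hdiag, sum_const, card_univ, nsmul_eq_mul]

end Group

section ProductSet

variable {G : Type} [Group G] [Fintype G] [DecidableEq G]

lemma leftConv_balancedIndicator_apply_of_notMem {A B C : Finset G} {x c : G}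
    (hx : x ∉ A * B * C) (hc : c ∈ C) :
    leftConv A (balancedIndicator B) (x * c⁻¹) = -(#A * #B / Fintype.card G) := by
  have hnot : ∀ a ∈ A, a⁻¹ * (x * c⁻¹) ∉ B := fun a ha hb =>
    hx (by simpa [mul_assoc] using mul_mem_mul (mul_mem_mul ha hb) hc)
  rw [leftConv_apply, sum_congr rfl fun a ha => by
    rw [balancedIndicator_apply, if_neg (hnot a ha)]]
  simp
  ring

lemma card_mul_sq_le_norm_leftConv_balancedIndicator_sq {A B C : Finset G} {x : G}
    (hx : x ∉ A * B * C) :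
    #C * (#A * #B / Fintype.card G) ^ 2 ≤ ‖leftConv A (balancedIndicator B)‖ ^ 2 := by
  set v := leftConv A (balancedIndicator B)
  calc (#C : ℝ) * (#A * #B / Fintype.card G) ^ 2 = ∑ c ∈ C, ‖v (x * c⁻¹)‖ ^ 2 := by
        rw [sum_congr rfl fun c hc => by rw [leftConv_balancedIndicator_apply_of_notMem hx hc]]
        simp
    _ ≤ ∑ c, ‖v (x * c⁻¹)‖ ^ 2 := sum_le_univ_sum_of_nonneg fun _ => by positivity
    _ = ‖v‖ ^ 2 := by
        rw [EuclideanSpace.norm_sq_eq]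
        exact Fintype.sum_equiv ((Equiv.inv G).trans (Equiv.mulLeft x)) _ _ fun _ => rfl

namespace FixedPointFreeDimAtLeast

variable {δ : ℝ}

lemma mul_norm_leftConv_balancedIndicator_sq_le (hrep : FixedPointFreeDimAtLeast G δ)
    (hδ : 0 < δ) (A B : Finset G) :
    δ * ‖leftConv A (balancedIndicator B)‖ ^ 2 ≤ Fintype.card G * #A * #B := by
  have hspec := hrep.mul_inner_map_self_le hδ (rightRegular G) inner_rightRegular
    (LinearMap.isPositive_adjoint_comp_self (leftConv A))
    (fun s v => by simp only [LinearMap.comp_apply, leftConv_rightRegular,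
      adjoint_leftConv_rightRegular])
    (invariants_rightRegular (G := G) ▸ balancedIndicator_mem_orthogonal B)
  rw [trace_adjoint_comp_leftConv, LinearMap.comp_apply, LinearMap.adjoint_inner_left,
    real_inner_self_eq_norm_sq] at hspec
  calc δ * ‖leftConv A (balancedIndicator B)‖ ^ 2
      ≤ Fintype.card G * #A * ‖balancedIndicator B‖ ^ 2 := hspec
    _ ≤ Fintype.card G * #A * #B := by gcongr; exact norm_balancedIndicator_sq_le B

lemma card_mul_card_mul_card_mul_le_of_notMem (hrep : FixedPointFreeDimAtLeast G δ)
    (hδ : 0 < δ) {A B C : Finset G} {x : G} (hx : x ∉ A * B * C) :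
    #A * #B * #C * δ ≤ (Fintype.card G : ℝ) ^ 3 := by
  have hn : (0 : ℝ) < Fintype.card G := by exact_mod_cast Fintype.card_pos
  rcases (by positivity : (0 : ℝ) ≤ #A * #B).eq_or_lt with hAB | hAB
  · rw [← hAB, zero_mul, zero_mul]
    positivity
  have hbound : δ * (#C * (#A * #B / Fintype.card G) ^ 2) ≤ Fintype.card G * #A * #B :=
    calc δ * (#C * (#A * #B / Fintype.card G) ^ 2 : ℝ)
        ≤ δ * ‖leftConv A (balancedIndicator B)‖ ^ 2 := by
          gcongr; exact card_mul_sq_le_norm_leftConv_balancedIndicator_sq hx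
      _ ≤ Fintype.card G * #A * #B := hrep.mul_norm_leftConv_balancedIndicator_sq_le hδ A B
  refine le_of_mul_le_mul_right ?_ hAB
  rw [div_pow, ← mul_div_assoc, ← mul_div_assoc, div_le_iff₀ (by positivity)] at hbound
  linarith

end FixedPointFreeDimAtLeast

end ProductSet

theorem nikolov_pyber_general {G : Type} [Group G] [Fintype G] [DecidableEq G]
    (δ : ℝ)
    (hrep : ∀ (V : Type) [AddCommGroup V] [Module ℝ V] [FiniteDimensional ℝ V]
      (ρ : Representation ℝ G V), Nontrivial V →
      (∀ v : V, (∀ g : G, ρ g v = v) → v = 0) →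
      δ ≤ Module.finrank ℝ V)
    (A B C : Finset G)
    (h : (Fintype.card G : ℝ) ^ 3 < (A.card : ℝ) * B.card * C.card * δ) :
    A * B * C = Finset.univ := by
  have hδ : 0 < δ := by
    by_contra! hδ
    have hn : (0 : ℝ) < Fintype.card G := by exact_mod_cast Fintype.card_pos
    nlinarith [mul_nonpos_of_nonneg_of_nonpos (by positivity : (0 : ℝ) ≤ #A * #B * #C) hδ,
      pow_pos hn 3]
  refine eq_univ_of_forall fun x => ?_
  by_contra hx
  exact h.not_ge (FixedPointFreeDimAtLeast.card_mul_card_mul_card_mul_le_of_notMem hrep hδ hx)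

/-- Nikolov–Pyber: let `G` be a finite group of order `n` such that every
nonzero finite-dimensional real representation of `G` with no nonzero
invariant vector has dimension at least `δ > 0`. If `A, B, C ⊆ G` satisfy
`#A · #B · #C · δ > n³`, then `ABC = G`. -/
theorem nikolov_pyber {G : Type} [Group G] [Fintype G] [DecidableEq G]
    (δ : ℝ) (hδ : 0 < δ)
    (hrep : ∀ (V : Type) [AddCommGroup V] [Module ℝ V] [FiniteDimensional ℝ V]
      (ρ : Representation ℝ G V), Nontrivial V →
      (∀ v : V, (∀ g : G, ρ g v = v) → v = 0) →
      δ ≤ Module.finrank ℝ V)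
    (A B C : Finset G)
    (h : (Fintype.card G : ℝ) ^ 3 < (A.card : ℝ) * B.card * C.card * δ) :
    A * B * C = Finset.univ :=
  nikolov_pyber_general δ hrep A B C h
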